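/- arXiv:2104.12393 — 10 statements merged into one kernel-verified Lean document; each statement's English description precedes it below -/
import Mathlib

section
/- Let (X,d) be a metric space, let α < 1 with α ≥ 0, and let F be a multivalued mapping from X to X such that for each x ∈ X there exists y ∈ F(x) satisfying d(y,x) = d(F(x),x) and d(F(y),y) ≤ α d(F(x),x). Then there exists a Cauchy sequence (x_n) in X such that x_{n+1} ∈ F(x_n) for every n. -/
/-!
Choose for every `x` a nearest point `f x ∈ F x` as in the hypothesis. Along the orbit
`xₙ = fⁿ x₀` the gaps `d(F(xₙ), xₙ) = d(xₙ₊₁, xₙ)` shrink at least geometrically with ratio `α`,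
so the orbit is Cauchy.
-/

open Metric Filter

theorem le_pow_mul_of_le_mul_iterate {X : Type*} {f : X → X} {φ : X → ℝ} {α : ℝ} (hα : 0 ≤ α)
    (hφ : ∀ x, φ (f x) ≤ α * φ x) (x : X) (n : ℕ) : φ (f^[n] x) ≤ α ^ n * φ x := by
  induction n with
  | zero => simp
  | succ n ih =>
    calc φ (f^[n + 1] x) = φ (f (f^[n] x)) := by rw [Function.iterate_succ_apply']
      _ ≤ α * φ (f^[n] x) := hφ _
      _ ≤ α * (α ^ n * φ x) := mul_le_mul_of_nonneg_left ih hα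
      _ = α ^ (n + 1) * φ x := by ring

theorem cauchySeq_iterate_of_dist_le_of_le_mul {X : Type*} [PseudoMetricSpace X] {f : X → X}
    {φ : X → ℝ} {α : ℝ} (hα : 0 ≤ α) (hα1 : α < 1) (hdist : ∀ x, dist x (f x) ≤ φ x)
    (hφ : ∀ x, φ (f x) ≤ α * φ x) (x : X) : CauchySeq fun n ↦ f^[n] x := by
  refine cauchySeq_of_le_geometric α (φ x) hα1 fun n ↦ ?_
  calc dist (f^[n] x) (f^[n + 1] x) = dist (f^[n] x) (f (f^[n] x)) := by
        rw [Function.iterate_succ_apply']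
    _ ≤ φ (f^[n] x) := hdist _
    _ ≤ α ^ n * φ x := le_pow_mul_of_le_mul_iterate hα hφ x n
    _ = φ x * α ^ n := mul_comm _ _

theorem cauchy_seq_of_nearest_point_contraction_general
    {X : Type*} [MetricSpace X] [Nonempty X]
    (F : X → Set X)
    (α : ℝ) (hα : 0 ≤ α) (hα1 : α < 1)
    (hF : ∀ x : X, ∃ y ∈ F x,
      dist y x = infDist x (F x) ∧
      infDist y (F y) ≤ α * infDist x (F x)) :
    ∃ u : ℕ → X, CauchySeq u ∧ ∀ n : ℕ, u (n + 1) ∈ F (u n) := by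
  choose f hfF hfdist hfcontr using hF
  obtain ⟨x₀⟩ := ‹Nonempty X›
  have hdist : ∀ x, dist x (f x) ≤ infDist x (F x) := fun x ↦ ((dist_comm _ _).trans (hfdist x)).le
  refine ⟨fun n ↦ f^[n] x₀, cauchySeq_iterate_of_dist_le_of_le_mul hα hα1 hdist hfcontr x₀,
    fun n ↦ ?_⟩
  simpa only [Function.iterate_succ_apply'] using hfF (f^[n] x₀)

/-- **Lemma 1.2.** Let `(X,d)` be a metric space and `F` a multivalued mapping from `X`
to `X` (nonempty values) such that for some `0 ≤ α < 1`, for each `x ∈ X` there exists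
`y ∈ F x` with `d(y,x) = d(F(x),x)` and `d(F(y),y) ≤ α·d(F(x),x)`.
Then there exists a Cauchy sequence `(xₙ)` in `X` with `xₙ₊₁ ∈ F xₙ` for all `n`. -/
theorem cauchy_seq_of_nearest_point_contraction
    {X : Type*} [MetricSpace X] [Nonempty X]
    (F : X → Set X) (hFne : ∀ x, (F x).Nonempty)
    (α : ℝ) (hα : 0 ≤ α) (hα1 : α < 1)
    (hF : ∀ x : X, ∃ y ∈ F x,
      dist y x = infDist x (F x) ∧
      infDist y (F y) ≤ α * infDist x (F x)) :
    ∃ u : ℕ → X, CauchySeq u ∧ ∀ n : ℕ, u (n + 1) ∈ F (u n) :=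
  cauchy_seq_of_nearest_point_contraction_general F α hα hα1 hF
end

section
/- Let (X,d) be a complete metric space and let F be a multivalued mapping from X to X with closed values such that: (i) for every sequence (x_n) converging to a point x ∈ X with lim_n d(F(x_n),x_n) = 0 one has d(F(x),x) = 0; and (ii) there exist α, ε ≥ 0 with α + ε < 1 such that for each x ∈ X there exists y ∈ F(x) with d(F(y),y) ≤ α d(y,x) and α d(y,x) ≤ (α+ε) d(F(x),x). Then F has a fixed point. -/
/-!
Iterating a selection `T x ∈ F x` given by (ii) from any starting point, the defect
`φ x = d(F x, x)` shrinks by the factor `α + ε` at each step, and each step has length at most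
`(α + ε) / α` times the current defect. So the orbit is Cauchy, its limit has defect `0` by (i),
and the values being closed, it is a fixed point. For `α ≤ 0`, (ii) already gives `d(F y, y) = 0`.
-/

open Metric Filter Topology

theorem exists_tendsto_iterate_and_tendsto_zero_of_le_mul_dist
    {X : Type*} [PseudoMetricSpace X] [CompleteSpace X] {T : X → X} {φ : X → ℝ} {α r : ℝ}
    (hα : 0 < α) (hr₀ : 0 ≤ r) (hr₁ : r < 1) (hφ : ∀ x, 0 ≤ φ x)
    (hφT : ∀ x, φ (T x) ≤ α * dist (T x) x) (hdistT : ∀ x, α * dist (T x) x ≤ r * φ x)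
    (x₀ : X) :
    ∃ x, Tendsto (fun n ↦ T^[n] x₀) atTop (𝓝 x) ∧
      Tendsto (fun n ↦ φ (T^[n] x₀)) atTop (𝓝 0) := by
  set u : ℕ → X := fun n ↦ T^[n] x₀
  have hsucc (n : ℕ) : u (n + 1) = T (u n) := Function.iterate_succ_apply' T n x₀
  have hφ_geom (n : ℕ) : φ (u n) ≤ r ^ n * φ x₀ :=
    le_geom (u := fun n ↦ φ (u n)) hr₀ n fun k _ ↦ hsucc k ▸ (hφT _).trans (hdistT _)
  have hdist (n : ℕ) : dist (u n) (u (n + 1)) ≤ r / α * φ x₀ * r ^ n := by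
    rw [hsucc, dist_comm]
    calc dist (T (u n)) (u n) = α * dist (T (u n)) (u n) / α := by field_simp
      _ ≤ r * (r ^ n * φ x₀) / α := by
        gcongr ?_ / α
        exact (hdistT _).trans (mul_le_mul_of_nonneg_left (hφ_geom n) hr₀)
      _ = r / α * φ x₀ * r ^ n := by ring
  obtain ⟨x, hx⟩ := cauchySeq_tendsto_of_complete (cauchySeq_of_le_geometric r _ hr₁ hdist)
  refine ⟨x, hx, squeeze_zero (fun n ↦ hφ _) hφ_geom ?_⟩
  simpa using (tendsto_pow_atTop_nhds_zero_of_lt_one hr₀ hr₁).mul_const (φ x₀)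

theorem fixed_point_of_generalized_contraction_general
    {X : Type*} [MetricSpace X] [CompleteSpace X] [Nonempty X]
    (F : X → Set X) (hFcl : ∀ x, IsClosed (F x))
    (hreg : ∀ (u : ℕ → X) (x : X), Tendsto u atTop (nhds x) →
      Tendsto (fun n => infDist (u n) (F (u n))) atTop (nhds 0) →
      infDist x (F x) = 0)
    (α ε : ℝ) (hε : 0 ≤ ε) (hαε : α + ε < 1)
    (hF : ∀ x : X, ∃ y ∈ F x,
      infDist y (F y) ≤ α * dist y x ∧
      α * dist y x ≤ (α + ε) * infDist x (F x)) :
    ∃ x : X, x ∈ F x := by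
  choose T hTF hT using hF
  have mem_of_infDist_eq_zero (x : X) (hx : infDist x (F x) = 0) : x ∈ F x :=
    ((hFcl x).mem_iff_infDist_zero ⟨_, hTF x⟩).2 hx
  rcases le_or_gt α 0 with hα | hα
  · set x := T (Classical.arbitrary X)
    refine ⟨x, mem_of_infDist_eq_zero x (le_antisymm ?_ infDist_nonneg)⟩
    exact (hT _).1.trans (mul_nonpos_of_nonpos_of_nonneg hα dist_nonneg)
  · obtain ⟨x, hx, hφx⟩ := exists_tendsto_iterate_and_tendsto_zero_of_le_mul_dist hα
      (by linarith) hαε (fun _ ↦ infDist_nonneg) (fun x ↦ (hT x).1) (fun x ↦ (hT x).2)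
      (Classical.arbitrary X)
    exact ⟨x, mem_of_infDist_eq_zero x (hreg _ x hx hφx)⟩

/-- **Theorem 1.4.** Let `(X,d)` be a complete metric space and `F` a multivalued mapping
from `X` to `X` with nonempty closed values such that:
(i) for every sequence `xₙ → x` with `d(F(xₙ),xₙ) → 0` one has `d(F(x),x) = 0`; and
(ii) for some `α, ε ≥ 0` with `α + ε < 1`, for each `x` there is `y ∈ F x` with
`d(F(y),y) ≤ α·d(y,x)` and `α·d(y,x) ≤ (α+ε)·d(F(x),x)`. Then `F` has a fixed point. -/
theorem fixed_point_of_generalized_contraction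
    {X : Type*} [MetricSpace X] [CompleteSpace X] [Nonempty X]
    (F : X → Set X) (hFne : ∀ x, (F x).Nonempty) (hFcl : ∀ x, IsClosed (F x))
    (hreg : ∀ (u : ℕ → X) (x : X), Tendsto u atTop (nhds x) →
      Tendsto (fun n => infDist (u n) (F (u n))) atTop (nhds 0) →
      infDist x (F x) = 0)
    (α ε : ℝ) (hα : 0 ≤ α) (hε : 0 ≤ ε) (hαε : α + ε < 1)
    (hF : ∀ x : X, ∃ y ∈ F x,
      infDist y (F y) ≤ α * dist y x ∧
      α * dist y x ≤ (α + ε) * infDist x (F x)) :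
    ∃ x : X, x ∈ F x :=
  fixed_point_of_generalized_contraction_general F hFcl hreg α ε hε hαε hF
end

section
/- Let (X,d) be a complete metric space and let F be a multivalued mapping from X to X such that: (i) for every sequence (x_n) converging to a point x ∈ X with lim_n d(F(x_n),x_n) = 0 one has d(F(x),x) = 0; and (ii) there exists α < 1, α ≥ 0, such that for each x ∈ X there exists y ∈ F(x) with d(y,x) = d(F(x),x) and d(F(y),y) ≤ α d(F(x),x). Then F has a fixed point. -/
open Metric Filter Topology

/-! Iterating the nearest-point selection `x ↦ y` of (ii) gives an orbit whose steps
`d(F(xₙ),xₙ)` shrink geometrically, so it is Cauchy and converges to some `x`; by (i),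
`d(F(x),x) = 0`, and the nearest point of `F(x)` supplied by (ii) is then `x` itself,
even though `F(x)` need not be closed. -/

theorem apply_iterate_le_mul_pow {X : Type*} {g : X → X} {D : X → ℝ} {α : ℝ}
    (hα : 0 ≤ α) (hD : ∀ x, D (g x) ≤ α * D x) (x : X) (n : ℕ) : D (g^[n] x) ≤ D x * α ^ n := by
  induction n with
  | zero => simp
  | succ n ih =>
    calc D (g^[n + 1] x) = D (g (g^[n] x)) := by rw [Function.iterate_succ_apply']
      _ ≤ α * D (g^[n] x) := hD _
      _ ≤ α * (D x * α ^ n) := mul_le_mul_of_nonneg_left ih hα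
      _ = D x * α ^ (n + 1) := by ring

section Orbit

variable {X : Type*} [PseudoMetricSpace X] {g : X → X} {D : X → ℝ} {α : ℝ}

theorem cauchySeq_iterate_of_dist_le (hα : 0 ≤ α) (hα1 : α < 1)
    (hdist : ∀ x, dist x (g x) ≤ D x) (hD : ∀ x, D (g x) ≤ α * D x) (x : X) :
    CauchySeq fun n => g^[n] x :=
  cauchySeq_of_le_geometric α (D x) hα1 fun n => by
    rw [Function.iterate_succ_apply']
    exact (hdist _).trans (apply_iterate_le_mul_pow hα hD x n)

theorem tendsto_apply_iterate_zero (hα : 0 ≤ α) (hα1 : α < 1)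
    (hdist : ∀ x, dist x (g x) ≤ D x) (hD : ∀ x, D (g x) ≤ α * D x) (x : X) :
    Tendsto (fun n => D (g^[n] x)) atTop (𝓝 0) := by
  have hgeom : Tendsto (fun n => D x * α ^ n) atTop (𝓝 0) := by
    simpa using (tendsto_pow_atTop_nhds_zero_of_lt_one hα hα1).const_mul (D x)
  exact squeeze_zero (fun n => dist_nonneg.trans (hdist _)) (apply_iterate_le_mul_pow hα hD x)
    hgeom

end Orbit

theorem fixed_point_of_nearest_point_contraction_general
    {X : Type*} [MetricSpace X] [CompleteSpace X] [Nonempty X]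
    (F : X → Set X)
    (hreg : ∀ (u : ℕ → X) (x : X), Tendsto u atTop (nhds x) →
      Tendsto (fun n => infDist (u n) (F (u n))) atTop (nhds 0) →
      infDist x (F x) = 0)
    (α : ℝ) (hα : 0 ≤ α) (hα1 : α < 1)
    (hF : ∀ x : X, ∃ y ∈ F x,
      dist y x = infDist x (F x) ∧
      infDist y (F y) ≤ α * infDist x (F x)) :
    ∃ x : X, x ∈ F x := by
  choose g hgF hgdist hgD using hF
  obtain ⟨x₀⟩ := ‹Nonempty X›
  have hdist : ∀ x, dist x (g x) ≤ infDist x (F x) := fun x =>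
    (dist_comm x (g x)).trans_le (hgdist x).le
  obtain ⟨x, hx⟩ :=
    cauchySeq_tendsto_of_complete (cauchySeq_iterate_of_dist_le hα hα1 hdist hgD x₀)
  have hx_dist : infDist x (F x) = 0 :=
    hreg _ x hx (tendsto_apply_iterate_zero hα hα1 hdist hgD x₀)
  have hgx : g x = x := dist_eq_zero.mp ((hgdist x).trans hx_dist)
  exact ⟨x, by simpa [hgx] using hgF x⟩

/-- **Theorem 1.5.** Let `(X,d)` be a complete metric space and `F` a multivalued mapping
from `X` to `X` (nonempty values) such that:
(i) for every sequence `xₙ → x` with `d(F(xₙ),xₙ) → 0` one has `d(F(x),x) = 0`; and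
(ii) for some `0 ≤ α < 1`, for each `x ∈ X` there exists `y ∈ F x` with
`d(y,x) = d(F(x),x)` and `d(F(y),y) ≤ α·d(F(x),x)`. Then `F` has a fixed point. -/
theorem fixed_point_of_nearest_point_contraction
    {X : Type*} [MetricSpace X] [CompleteSpace X] [Nonempty X]
    (F : X → Set X) (hFne : ∀ x, (F x).Nonempty)
    (hreg : ∀ (u : ℕ → X) (x : X), Tendsto u atTop (nhds x) →
      Tendsto (fun n => infDist (u n) (F (u n))) atTop (nhds 0) →
      infDist x (F x) = 0)
    (α : ℝ) (hα : 0 ≤ α) (hα1 : α < 1)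
    (hF : ∀ x : X, ∃ y ∈ F x,
      dist y x = infDist x (F x) ∧
      infDist y (F y) ≤ α * infDist x (F x)) :
    ∃ x : X, x ∈ F x :=
  fixed_point_of_nearest_point_contraction_general F hreg α hα hα1 hF
end

section
/- Let (X,d) be a bead space and F a multivalued mapping from X to X. Assume (x_n) is a bounded regular sequence in X, x is an asymptotic center of (x_n), y_n ∈ F(x_n) satisfy lim_n d(y_n,x_n) = 0, and limsup_n d(F(x),y_n) ≤ limsup_n d(x,x_n). If F(x) is compact, then x ∈ F(x). -/
open Metric Filter

/-- A metric space `X` is a *bead space* if for every `r > 0` and `β > 0` there exists a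
`δ > 0` such that for all `x y` with `d(x,y) ≥ β` there is a `z` with
`B(x,r+δ) ∩ B(y,r+δ) ⊆ B(z,r−δ)` (closed balls). -/
def IsBeadSpace (X : Type*) [MetricSpace X] : Prop :=
  ∀ r : ℝ, 0 < r → ∀ β : ℝ, 0 < β → ∃ δ : ℝ, 0 < δ ∧
    ∀ x y : X, β ≤ dist x y → ∃ z : X,
      Metric.closedBall x (r + δ) ∩ Metric.closedBall y (r + δ) ⊆ Metric.closedBall z (r - δ)

/-- The asymptotic radius of a sequence: `inf_{z ∈ X} limsup_n d(z, uₙ)`. -/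
noncomputable def asympRadius {X : Type*} [MetricSpace X] (u : ℕ → X) : ℝ :=
  ⨅ z : X, Filter.limsup (fun n => dist z (u n)) Filter.atTop

/-- `c` is an asymptotic center of the sequence `u` if `limsup_n d(c,uₙ)` equals the
asymptotic radius of `u`. -/
def IsAsympCenter {X : Type*} [MetricSpace X] (u : ℕ → X) (c : X) : Prop :=
  Filter.limsup (fun n => dist c (u n)) Filter.atTop = asympRadius u

/-- A bounded sequence is *regular* if each of its subsequences has the same asymptotic
radius. -/
def IsRegularSeq {X : Type*} [MetricSpace X] (u : ℕ → X) : Prop :=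
  ∀ φ : ℕ → ℕ, StrictMono φ → asympRadius (u ∘ φ) = asympRadius u

/-!
Suppose `x ∉ F x` and let `zₙ ∈ F x` be a point nearest to `yₙ`. Since
`d(zₙ, xₙ) ≤ d(F x, yₙ) + d(yₙ, xₙ)` and `d(yₙ, xₙ) → 0`, we get
`limsup d(zₙ, xₙ) ≤ r := limsup d(x, xₙ)`; by compactness a subsequence `z_{φ n}` converges
to some `a ∈ F x`, so that `x` and `a ≠ x` both satisfy `limsup d(·, x_{φ n}) ≤ r`. By
regularity `r` is also the asymptotic radius of `(x_{φ n})`, and in a bead space a sequence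
has at most one point with this property: for `r > 0` the bead condition at `x, a` produces
a point `w` with `limsup d(w, x_{φ n}) ≤ r - δ`.
-/

open Topology Set

section Limsup

variable {ι : Type*} {l : Filter ι} [l.NeBot]

lemma limsup_le_limsup_of_le_add_of_tendsto_zero {f g h : ι → ℝ} (hf : ∀ i, 0 ≤ f i)
    (hfgh : ∀ i, f i ≤ g i + h i) (hg : IsBoundedUnder (· ≤ ·) l g)
    (hh : Tendsto h l (𝓝 0)) : limsup f l ≤ limsup g l := by
  refine le_of_forall_pos_le_add fun ε hε => limsup_le_of_le (isCoboundedUnder_le_of_le l hf) ?_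
  filter_upwards [eventually_lt_of_limsup_lt (lt_add_of_pos_right _ (half_pos hε)) hg,
    hh.eventually (gt_mem_nhds (half_pos hε))] with i hgi hhi
  linarith [hfgh i]

end Limsup

section Metric

variable {ι X : Type*}

lemma Bornology.IsBounded.isBoundedUnder_dist [PseudoMetricSpace X] {l : Filter ι}
    {u v : ι → X} (hu : Bornology.IsBounded (range u)) (hv : Bornology.IsBounded (range v)) :
    IsBoundedUnder (· ≤ ·) l (fun i => dist (u i) (v i)) :=
  isBoundedUnder_of ⟨diam (range u ∪ range v), fun i =>
    dist_le_diam_of_mem (hu.union hv) (Or.inl ⟨i, rfl⟩) (Or.inr ⟨i, rfl⟩)⟩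

lemma Bornology.IsBounded.isBoundedUnder_dist_left [PseudoMetricSpace X] {l : Filter ι}
    {u : ι → X} (hu : Bornology.IsBounded (range u)) (z : X) :
    IsBoundedUnder (· ≤ ·) l (fun i => dist z (u i)) :=
  (isBounded_singleton.subset range_const_subset).isBoundedUnder_dist hu

lemma limsup_dist_nonneg [PseudoMetricSpace X] {l : Filter ι} [l.NeBot] {u : ι → X}
    (hu : Bornology.IsBounded (range u)) (z : X) :
    0 ≤ limsup (fun i => dist z (u i)) l :=
  le_limsup_of_frequently_le (Frequently.of_forall fun _ => dist_nonneg)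
    (hu.isBoundedUnder_dist_left z)

variable [MetricSpace X]

lemma asympRadius_le_limsup_dist {u : ℕ → X} (hu : Bornology.IsBounded (range u)) (z : X) :
    asympRadius u ≤ limsup (fun n => dist z (u n)) atTop :=
  ciInf_le ⟨0, forall_mem_range.2 fun w => limsup_dist_nonneg hu w⟩ z

theorem IsBeadSpace.eq_of_limsup_dist_le_asympRadius (hX : IsBeadSpace X) {u : ℕ → X}
    (hu : Bornology.IsBounded (range u)) {x a : X}
    (hx : limsup (fun n => dist x (u n)) atTop ≤ asympRadius u)
    (ha : limsup (fun n => dist a (u n)) atTop ≤ asympRadius u) : x = a := by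
  set r := asympRadius u
  have eventually_lt : ∀ z, limsup (fun n => dist z (u n)) atTop ≤ r → ∀ s, r < s →
      ∀ᶠ n in atTop, dist z (u n) < s := fun z hz s hs =>
    eventually_lt_of_limsup_lt (hz.trans_lt hs) (hu.isBoundedUnder_dist_left z)
  by_contra hxa
  have hβ : 0 < dist x a := dist_pos.2 hxa
  rcases ((limsup_dist_nonneg hu x).trans hx).eq_or_lt with hr | hr
  · obtain ⟨n, hxn, han⟩ := ((eventually_lt x hx (dist x a / 2) (by linarith)).and
      (eventually_lt a ha (dist x a / 2) (by linarith))).exists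
    linarith [dist_triangle_right x a (u n)]
  · obtain ⟨δ, hδ, hbead⟩ := hX r hr _ hβ
    obtain ⟨w, hw⟩ := hbead x a le_rfl
    have hw_le : limsup (fun n => dist w (u n)) atTop ≤ r - δ := by
      refine limsup_le_of_le (isCoboundedUnder_le_of_le atTop fun _ => dist_nonneg) ?_
      filter_upwards [eventually_lt x hx (r + δ) (by linarith),
        eventually_lt a ha (r + δ) (by linarith)] with n hxn han
      exact mem_closedBall'.1 (hw ⟨mem_closedBall'.2 hxn.le, mem_closedBall'.2 han.le⟩)
    linarith [asympRadius_le_limsup_dist hu w]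

end Metric

theorem mem_of_asympCenter_of_bead_general
    {X : Type*} [MetricSpace X] (hbead : IsBeadSpace X)
    (F : X → Set X) (hFne : ∀ x, (F x).Nonempty)
    (u : ℕ → X) (hbdd : Bornology.IsBounded (Set.range u))
    (hreg : IsRegularSeq u)
    (x : X) (hx : IsAsympCenter u x)
    (y : ℕ → X)
    (hlim : Tendsto (fun n => dist (y n) (u n)) atTop (nhds 0))
    (hsup : Filter.limsup (fun n => infDist (y n) (F x)) atTop ≤
      Filter.limsup (fun n => dist x (u n)) atTop)
    (hcpt : IsCompact (F x)) :
    x ∈ F x := by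
  by_contra hxF
  choose z hzF hzd using fun n => hcpt.exists_infDist_eq_dist (hFne x) (y n)
  have hzu_bdd : IsBoundedUnder (· ≤ ·) atTop (fun n => dist (z n) (u n)) :=
    (hcpt.isBounded.subset (range_subset_iff.2 hzF)).isBoundedUnder_dist hbdd
  have hinf_bdd : IsBoundedUnder (· ≤ ·) atTop (fun n => infDist (y n) (F x)) :=
    (isBoundedUnder_le_add hlim.isBoundedUnder_le hzu_bdd).mono_le <|
      Eventually.of_forall fun n => (hzd n).trans_le (dist_triangle_right _ _ _)
  have hzu : limsup (fun n => dist (z n) (u n)) atTop ≤ limsup (fun n => dist x (u n)) atTop :=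
    (limsup_le_limsup_of_le_add_of_tendsto_zero (fun _ => dist_nonneg)
      (fun n => (hzd n).symm ▸ dist_triangle_left _ _ _) hinf_bdd hlim).trans hsup
  obtain ⟨a, haF, φ, hφ, hza⟩ := hcpt.tendsto_subseq hzF
  have hrφ : asympRadius (u ∘ φ) = limsup (fun n => dist x (u n)) atTop :=
    (hreg φ hφ).trans hx.symm
  have hx_sub : limsup (fun n => dist x ((u ∘ φ) n)) atTop ≤ asympRadius (u ∘ φ) :=
    (hφ.tendsto_atTop.limsup_comp_le_limsup (isCoboundedUnder_le_of_le _ fun _ => dist_nonneg)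
      (hbdd.isBoundedUnder_dist_left x)).trans hrφ.ge
  have ha_sub : limsup (fun n => dist a ((u ∘ φ) n)) atTop ≤ asympRadius (u ∘ φ) :=
    calc limsup (fun n => dist a ((u ∘ φ) n)) atTop
        ≤ limsup ((fun n => dist (z n) (u n)) ∘ φ) atTop :=
          limsup_le_limsup_of_le_add_of_tendsto_zero (fun _ => dist_nonneg)
            (fun n => (dist_triangle_left _ _ _).trans_eq (add_comm _ _))
            (hφ.tendsto_atTop.isBoundedUnder_comp hzu_bdd) (tendsto_iff_dist_tendsto_zero.1 hza)
      _ ≤ limsup (fun n => dist (z n) (u n)) atTop :=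
          hφ.tendsto_atTop.limsup_comp_le_limsup (isCoboundedUnder_le_of_le _
            fun _ => dist_nonneg) hzu_bdd
      _ ≤ asympRadius (u ∘ φ) := hzu.trans hrφ.ge
  exact hxF (hbead.eq_of_limsup_dist_le_asympRadius
    (hbdd.subset (range_comp_subset_range φ u)) hx_sub ha_sub ▸ haF)

/-- **Theorem 2.3.** Let `(X,d)` be a bead space and `F` a multivalued mapping from `X`
to `X` (nonempty values). Assume `(xₙ)` is a bounded regular sequence, `x` is an
asymptotic center of `(xₙ)`, `yₙ ∈ F(xₙ)` satisfy `d(yₙ,xₙ) → 0`, and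
`limsup_n d(F(x),yₙ) ≤ limsup_n d(x,xₙ)`. If `F(x)` is compact, then `x ∈ F(x)`. -/
theorem mem_of_asympCenter_of_bead
    {X : Type*} [MetricSpace X] (hbead : IsBeadSpace X)
    (F : X → Set X) (hFne : ∀ x, (F x).Nonempty)
    (u : ℕ → X) (hbdd : Bornology.IsBounded (Set.range u))
    (hreg : IsRegularSeq u)
    (x : X) (hx : IsAsympCenter u x)
    (y : ℕ → X) (hy : ∀ n, y n ∈ F (u n))
    (hlim : Tendsto (fun n => dist (y n) (u n)) atTop (nhds 0))
    (hsup : Filter.limsup (fun n => infDist (y n) (F x)) atTop ≤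
      Filter.limsup (fun n => dist x (u n)) atTop)
    (hcpt : IsCompact (F x)) :
    x ∈ F x :=
  mem_of_asympCenter_of_bead_general hbead F hFne u hbdd hreg x hx y hlim hsup hcpt
end

section
/- Let (X,d) be a complete bead space and let F be a multivalued mapping from X to X with compact values, with F(X) = ⋃_{x∈X} F(x) bounded, and nonexpansive, i.e. D(F(y),F(x)) ≤ d(y,x) for all x,y ∈ X. If there exists a sequence (x_n) in X such that lim_n d(F(x_n),x_n) = 0, then F has a fixed point. -/
/-!
Pass to nearest points so that the approximate fixed points `xₙ` lie in the bounded set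
`F(X)`, and measure every `z` by its asymptotic radius `r z = lim_U d(z, xₙ)` along a free
ultrafilter `U`. The bead property says that two points at distance `≥ β` whose radii are both
close to `ρ = inf r` could be replaced by a point of radius `< ρ`; hence the sublevel sets of `r`
near `ρ` shrink, and by completeness `r` has a unique minimiser `z`, the asymptotic centre.
Nonexpansiveness and compactness of `F z` give a point `w ∈ F z` with `r w ≤ r z`, so `w = z`.
-/

open Metric Filter

open Set Topology Bornology

section AsymptoticRadius

variable {ι X : Type*} [MetricSpace X] {l : Filter ι} {x : ι → X} {r : X → ℝ}

theorem exists_tendsto_dist_of_isBounded_range (U : Ultrafilter ι) (hx : IsBounded (range x))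
    (z : X) : ∃ c, Tendsto (fun n => dist z (x n)) U (𝓝 c) := by
  obtain ⟨R, hR⟩ := hx.subset_closedBall z
  have hmem : ∀ n, dist z (x n) ∈ Icc 0 R := fun n =>
    ⟨dist_nonneg, mem_closedBall'.1 (hR (mem_range_self n))⟩
  obtain ⟨c, -, hc⟩ := isCompact_Icc.ultrafilter_le_nhds (U.map fun n => dist z (x n))
    (by rw [Ultrafilter.coe_map]; exact tendsto_principal.2 (.of_forall hmem))
  exact ⟨c, hc⟩

theorem dist_le_add_of_tendsto_dist [l.NeBot]
    (hr : ∀ z, Tendsto (fun n => dist z (x n)) l (𝓝 (r z))) (z w : X) :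
    dist z w ≤ r z + r w :=
  le_of_tendsto_of_tendsto' tendsto_const_nhds ((hr z).add (hr w)) fun n =>
    dist_triangle_right z w (x n)

theorem lipschitzWith_one_of_tendsto_dist [l.NeBot]
    (hr : ∀ z, Tendsto (fun n => dist z (x n)) l (𝓝 (r z))) : LipschitzWith 1 r :=
  LipschitzWith.of_le_add fun z w =>
    le_of_tendsto_of_tendsto' (hr z) ((hr w).add tendsto_const_nhds) fun n =>
      (dist_triangle z w (x n)).trans_eq (add_comm _ _)

theorem IsBeadSpace.exists_forall_dist_lt_of_tendsto_dist (hX : IsBeadSpace X) [l.NeBot]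
    (hr : ∀ z, Tendsto (fun n => dist z (x n)) l (𝓝 (r z))) {ρ : ℝ}
    (hρ : ∀ z, ρ ≤ r z) {β : ℝ} (hβ : 0 < β) :
    ∃ δ > 0, ∀ z w, r z ≤ ρ + δ → r w ≤ ρ + δ → dist z w < β := by
  rcases le_or_gt ρ 0 with hρ0 | hρ0
  · refine ⟨β / 3, by positivity, fun z w hz hw => ?_⟩
    linarith [dist_le_add_of_tendsto_dist hr z w]
  obtain ⟨δ, hδ, hbead⟩ := hX ρ hρ0 β hβ
  refine ⟨δ / 2, by positivity, fun z w hz hw => ?_⟩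
  by_contra! hzw
  obtain ⟨c, hc⟩ := hbead z w hzw
  have hxc : ∀ᶠ n in l, dist c (x n) ≤ ρ - δ := by
    have hz' : r z < ρ + δ := by linarith
    have hw' : r w < ρ + δ := by linarith
    filter_upwards [(hr z).eventually_lt_const hz', (hr w).eventually_lt_const hw']
      with n hzn hwn
    exact mem_closedBall'.1 (hc ⟨mem_closedBall'.2 hzn.le, mem_closedBall'.2 hwn.le⟩)
  linarith [le_of_tendsto (hr c) hxc, hρ c]

theorem IsBeadSpace.eq_of_tendsto_dist (hX : IsBeadSpace X) [l.NeBot]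
    (hr : ∀ z, Tendsto (fun n => dist z (x n)) l (𝓝 (r z))) {ρ : ℝ}
    (hρ : ∀ z, ρ ≤ r z) {z w : X} (hz : r z ≤ ρ) (hw : r w ≤ ρ) : z = w := by
  by_contra hzw
  obtain ⟨δ, hδ, h⟩ :=
    hX.exists_forall_dist_lt_of_tendsto_dist hr hρ (dist_pos.2 hzw)
  exact lt_irrefl _ (h z w (by linarith) (by linarith))

theorem IsCompact.exists_mem_le_of_tendsto_dist {K : Set X} (hK : IsCompact K)
    (hKne : K.Nonempty) (U : Ultrafilter ι)
    (hr : ∀ z, Tendsto (fun n => dist z (x n)) U (𝓝 (r z))) {g : ι → ℝ} {c : ℝ}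
    (hg : Tendsto g U (𝓝 c)) (hle : ∀ n, infDist (x n) K ≤ g n) :
    ∃ w ∈ K, r w ≤ c := by
  choose y hyK hy using fun n => hK.exists_infDist_eq_dist hKne (x n)
  obtain ⟨w, hwK, hw⟩ := hK.ultrafilter_le_nhds (U.map y)
    (by rw [Ultrafilter.coe_map]; exact tendsto_principal.2 (.of_forall hyK))
  rw [Ultrafilter.coe_map] at hw
  have hyw : Tendsto (fun n => dist w (y n)) U (𝓝 0) := by
    simpa using (tendsto_const_nhds (x := w)).dist hw
  refine ⟨w, hwK, ?_⟩
  have := le_of_tendsto_of_tendsto' (hr w) (hyw.add hg) fun n =>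
    calc dist w (x n) ≤ dist w (y n) + dist (y n) (x n) := dist_triangle _ _ _
      _ ≤ dist w (y n) + g n := by rw [dist_comm (y n), ← hy n]; gcongr; exact hle n
  simpa using this

end AsymptoticRadius

/-- Tikhonov's theorem on well-posed minimisation problems. -/
theorem exists_eq_of_isGLB_of_forall_dist_lt {X : Type*} [PseudoMetricSpace X]
    [CompleteSpace X]
    {f : X → ℝ} (hf : Continuous f) {ρ : ℝ} (hρ : IsGLB (range f) ρ)
    (hwp : ∀ β > 0, ∃ δ > 0, ∀ z w, f z ≤ ρ + δ → f w ≤ ρ + δ → dist z w < β) :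
    ∃ z, f z = ρ := by
  have hne : (comap f (𝓝 ρ)).NeBot := comap_neBot fun t ht => by
    obtain ⟨_, hmt, z, rfl⟩ := mem_closure_iff_nhds.1 (hρ.mem_closure hρ.nonempty) t ht
    exact ⟨z, hmt⟩
  have hcauchy : Cauchy (comap f (𝓝 ρ)) := by
    refine Metric.cauchy_iff.2 ⟨hne, fun β hβ => ?_⟩
    obtain ⟨δ, hδ, h⟩ := hwp β hβ
    exact ⟨f ⁻¹' Iic (ρ + δ), preimage_mem_comap (Iic_mem_nhds (by linarith)),
      fun z hz w hw => h z w hz hw⟩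
  obtain ⟨z, hz⟩ := CompleteSpace.complete hcauchy
  exact ⟨z, tendsto_nhds_unique ((hf.tendsto z).mono_left (map_mono hz)) tendsto_comap⟩

theorem infDist_le_infDist_add_dist_of_hausdorffDist_le {X : Type*} [PseudoMetricSpace X]
    {F : X → Set X} (hFne : ∀ x, (F x).Nonempty) (hFb : ∀ x, IsBounded (F x))
    (hF : ∀ x y, hausdorffDist (F y) (F x) ≤ dist y x) (p a b : X) :
    infDist p (F a) ≤ infDist p (F b) + dist b a :=
  (infDist_le_infDist_add_hausdorffDist
    (hausdorffEDist_ne_top_of_nonempty_of_bounded (hFne b) (hFne a) (hFb b) (hFb a))).trans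
    (add_le_add_right (hF a b) _)

/-- **Theorem 2.7.** Let `(X,d)` be a complete bead space and `F` a bounded,
compact-valued (nonempty values) nonexpansive multivalued mapping from `X` to `X`
(nonexpansive in the sense of the Hausdorff distance). If there exists a sequence `(xₙ)`
with `d(F(xₙ),xₙ) → 0`, then `F` has a fixed point. -/
theorem fixed_point_of_nonexpansive_bead
    {X : Type*} [MetricSpace X] [CompleteSpace X] (hbead : IsBeadSpace X)
    (F : X → Set X) (hFne : ∀ x, (F x).Nonempty) (hFcpt : ∀ x, IsCompact (F x))
    (hFbdd : Bornology.IsBounded (⋃ x : X, F x))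
    (hnonexp : ∀ x y : X, hausdorffDist (F y) (F x) ≤ dist y x)
    (hseq : ∃ u : ℕ → X, Tendsto (fun n => infDist (u n) (F (u n))) atTop (nhds 0)) :
    ∃ x : X, x ∈ F x := by
  obtain ⟨u, hu⟩ := hseq
  have hF := infDist_le_infDist_add_dist_of_hausdorffDist_le hFne (fun x => (hFcpt x).isBounded)
    hnonexp
  choose x hxF hxu using fun n => (hFcpt (u n)).exists_infDist_eq_dist (hFne (u n)) (u n)
  have hx : Tendsto (fun n => infDist (x n) (F (x n))) atTop (𝓝 0) := by
    refine squeeze_zero (fun n => infDist_nonneg) (fun n => ?_) hu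
    simpa [infDist_zero_of_mem (hxF n), hxu n, dist_comm] using hF (x n) (x n) (u n)
  have hxb : IsBounded (range x) :=
    hFbdd.subset (range_subset_iff.2 fun n => mem_iUnion_of_mem (u n) (hxF n))
  let U := hyperfilter ℕ
  choose r hr using exists_tendsto_dist_of_isBounded_range U hxb
  have : Nonempty X := ⟨u 0⟩
  have hρ : IsGLB (range r) (⨅ z, r z) :=
    isGLB_ciInf ⟨0, forall_mem_range.2 fun z => ge_of_tendsto' (hr z) fun _ => dist_nonneg⟩
  have hρr : ∀ z, ⨅ z, r z ≤ r z := fun z => hρ.1 (mem_range_self z)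
  obtain ⟨z, hz⟩ := exists_eq_of_isGLB_of_forall_dist_lt
    (lipschitzWith_one_of_tendsto_dist hr).continuous hρ
    fun β hβ => hbead.exists_forall_dist_lt_of_tendsto_dist hr hρr hβ
  obtain ⟨w, hwF, hw⟩ := (hFcpt z).exists_mem_le_of_tendsto_dist (hFne z) U hr
    ((hx.mono_left Nat.hyperfilter_le_atTop).add ((hr z).congr fun n => dist_comm z (x n)))
    fun n => hF (x n) z (x n)
  rw [zero_add, hz] at hw
  exact ⟨z, hbead.eq_of_tendsto_dist hr hρr hz.le hw ▸ hwF⟩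
end

section
/- Let Y be a set, X ⊆ Y a nonempty subset, and δ a metric on X such that (X,δ) is a complete metric space. Let φ : X → ℝ be lower semicontinuous on (X,δ) and bounded below. Let F be a multivalued mapping from X to Y such that for each x ∈ X with x ∉ F(x) there exists z ∈ X with z ≠ x and δ(x,z) ≤ φ(x) − φ(z). Then F has a fixed point, i.e. there is x ∈ X with x ∈ F(x). -/
/-!
Ekeland–Caristi: pick `u (n+1)` in the Brøndsted cone `S (u n) = {z | d(u n, z) ≤ φ (u n) - φ z}`
with `φ (u (n+1))` within `1/(n+1)` of the infimum of `φ` on that cone. The cones are closed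
(lower semicontinuity), nested (triangle inequality), and `S (u (n+1))` lies in the ball of
radius `1/(n+1)` about `u (n+1)`, so by completeness they meet in a single point `x`. Every
`z ∈ S x` lies in all the cones, hence `z = x`; thus a non-fixed point would violate the hypothesis.
-/

open Metric Filter

section PseudoMetric

variable {X : Type*} [PseudoMetricSpace X] {φ : X → ℝ}

/-- The upper set of `x` in the Brøndsted order `x ≼ z ↔ dist x z ≤ φ x - φ z`. -/
def caristiSet (φ : X → ℝ) (x : X) : Set X := {z | dist x z ≤ φ x - φ z}

lemma self_mem_caristiSet (φ : X → ℝ) (x : X) : x ∈ caristiSet φ x := by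
  simp [caristiSet]

lemma caristiSet_subset {x z : X} (hz : z ∈ caristiSet φ x) :
    caristiSet φ z ⊆ caristiSet φ x := fun w hw => by
  simp only [caristiSet, Set.mem_ofPred_eq] at hz hw ⊢
  linarith [dist_triangle x z w]

lemma isClosed_caristiSet (hφ : LowerSemicontinuous φ) (x : X) :
    IsClosed (caristiSet φ x) := by
  have hlsc : LowerSemicontinuous fun z => dist x z + φ z :=
    (continuous_const.dist continuous_id).lowerSemicontinuous.add hφ
  convert hlsc.isClosed_preimage (φ x) using 1
  ext z
  simp only [caristiSet, Set.mem_ofPred_eq, Set.mem_preimage, Set.mem_Iic]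
  constructor <;> intro h <;> linarith

lemma exists_caristiSet_subset_closedBall (hbdd : BddBelow (Set.range φ)) (x : X) {ε : ℝ}
    (hε : 0 < ε) : ∃ z ∈ caristiSet φ x, caristiSet φ z ⊆ closedBall z ε := by
  have hne : (φ '' caristiSet φ x).Nonempty := ⟨φ x, x, self_mem_caristiSet φ x, rfl⟩
  have hbdd' : BddBelow (φ '' caristiSet φ x) := hbdd.mono (Set.image_subset_range _ _)
  obtain ⟨_, ⟨z, hz, rfl⟩, hz_lt⟩ :=
    exists_lt_of_csInf_lt hne (lt_add_of_pos_right (sInf (φ '' caristiSet φ x)) hε)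
  refine ⟨z, hz, fun w hw => ?_⟩
  have hinf_le : sInf (φ '' caristiSet φ x) ≤ φ w :=
    csInf_le hbdd' ⟨w, caristiSet_subset hz hw, rfl⟩
  rw [mem_closedBall, dist_comm]
  exact hw.trans (by linarith)

end PseudoMetric

lemma exists_forall_mem_caristiSet_eq {X : Type*} [MetricSpace X] [CompleteSpace X]
    [Nonempty X] {φ : X → ℝ} (hφ : LowerSemicontinuous φ) (hbdd : BddBelow (Set.range φ)) :
    ∃ x : X, ∀ z ∈ caristiSet φ x, z = x := by
  choose next hnext_mem hnext_ball using fun (n : ℕ) (x : X) =>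
    exists_caristiSet_subset_closedBall hbdd x (Nat.one_div_pos_of_nat (n := n))
  let u : ℕ → X := fun n => Nat.rec (Classical.arbitrary X) (fun n x => next n x) n
  let s : ℕ → Set X := fun n => caristiSet φ (u (n + 1))
  have hs_anti : Antitone s :=
    antitone_nat_of_succ_le fun n => caristiSet_subset (hnext_mem (n + 1) (u (n + 1)))
  have hs_ball (n : ℕ) : s n ⊆ closedBall (u (n + 1)) (1 / (n + 1)) := hnext_ball n (u n)
  have hs_bdd (n : ℕ) : Bornology.IsBounded (s n) := isBounded_closedBall.subset (hs_ball n)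
  have hs_diam : Tendsto (fun n => diam (s n)) atTop (nhds 0) := by
    have hlim := (tendsto_one_div_add_atTop_nhds_zero_nat (𝕜 := ℝ)).const_mul 2
    rw [mul_zero] at hlim
    refine squeeze_zero (fun n => diam_nonneg) (fun n => ?_) hlim
    exact (diam_mono (hs_ball n) isBounded_closedBall).trans
      (diam_closedBall (by positivity))
  obtain ⟨x, hx⟩ := nonempty_iInter_of_nonempty_biInter
    (fun n => isClosed_caristiSet hφ (u (n + 1))) hs_bdd
    (fun N => ⟨u (N + 1), Set.mem_iInter₂.2 fun n hn =>
      hs_anti hn (self_mem_caristiSet φ (u (N + 1)))⟩) hs_diam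
  rw [Set.mem_iInter] at hx
  refine ⟨x, fun z hz => dist_le_zero.1 (ge_of_tendsto' hs_diam fun n => ?_)⟩
  exact dist_le_diam_of_mem (hs_bdd n) (caristiSet_subset (hx n) hz) (hx n)

theorem fixed_point_of_caristi_tool_general
    {Y : Type*} (X : Set Y) (hX : X.Nonempty)
    [MetricSpace X] [CompleteSpace X]
    (φ : X → ℝ) (hφ : LowerSemicontinuous φ) (hbdd : BddBelow (Set.range φ))
    (F : X → Set Y)
    (hcond : ∀ x : X, (x : Y) ∉ F x → ∃ z : X, z ≠ x ∧ dist x z ≤ φ x - φ z) :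
    ∃ x : X, (x : Y) ∈ F x := by
  have : Nonempty X := hX.to_subtype
  obtain ⟨x, hx⟩ := exists_forall_mem_caristiSet_eq hφ hbdd
  by_contra! hnone
  obtain ⟨z, hzx, hz⟩ := hcond x (hnone x)
  exact hzx (hx z hz)

/-- **Theorem 3.2.** Let `Y` be a set, `X ⊆ Y` a nonempty subset carrying a complete
metric `δ`, and `φ : X → ℝ` lower semicontinuous and bounded below. If `F` is a
multivalued mapping from `X` to `Y` (nonempty values) such that for each `x ∈ X` with
`x ∉ F(x)` there exists `z ∈ X`, `z ≠ x`, with `δ(x,z) ≤ φ(x) − φ(z)`, then `F` has a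
fixed point. -/
theorem fixed_point_of_caristi_tool
    {Y : Type*} (X : Set Y) (hX : X.Nonempty)
    [MetricSpace X] [CompleteSpace X]
    (φ : X → ℝ) (hφ : LowerSemicontinuous φ) (hbdd : BddBelow (Set.range φ))
    (F : X → Set Y) (hFne : ∀ x, (F x).Nonempty)
    (hcond : ∀ x : X, (x : Y) ∉ F x → ∃ z : X, z ≠ x ∧ dist x z ≤ φ x - φ z) :
    ∃ x : X, (x : Y) ∈ F x :=
  fixed_point_of_caristi_tool_general X hX φ hφ hbdd F hcond
end

section
/- Let (Y,d) be a metric space, let X and C be nonempty subsets of Y, and let x ∈ X. Then for each ε > 0 and each t ∈ C ∩ Ĩ_X(x) there exists z ∈ X with z ≠ x such that (1−ε) d(x,z) ≤ d(x,t) − d(z,t). If moreover t is a nearest point of C to x, i.e. d(x,t) = d(x,C), and t ∈ Ĩ_X(x), then (1−ε) d(x,z) ≤ d(x,C) − d(z,C). -/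
/-! A point `z` within `β·d(x,s)` of a point `s ∈ (x,t]` moves from `x` towards `t` almost
as far as `s` does: `d(x,t) - d(z,t) ≥ d(x,s) - d(z,s) ≥ (1-β)·d(x,s)`, while
`d(x,z) ≤ (1+β)·d(x,s)`. Taking `β = min(ε,1)/2` gives the ratio `1-ε`, and `β < 1`
forces `z ≠ x`. A nearest point `t` of `C`
turns the estimate against `t` into one against `C`, since `d(z,C) ≤ d(z,t)`. -/

open Metric Filter

/-- The generalized inward set `Ĩ_X(x)`: the set of `t ∈ Y` such that for each `β > 0`
there are `s ∈ (x,t]` (i.e. `d(x,s) + d(s,t) = d(x,t)` and `s ≠ x`) and `z ∈ X` with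
`d(z,s) ≤ β·d(x,s)`. -/
def genInwardSet {Y : Type*} [MetricSpace Y] (X : Set Y) (x : Y) : Set Y :=
  {t | ∀ β : ℝ, 0 < β → ∃ s : Y,
    (dist x s + dist s t = dist x t ∧ s ≠ x) ∧ ∃ z ∈ X, dist z s ≤ β * dist x s}

section InwardStep

variable {Y : Type*} [MetricSpace Y]

theorem dist_sub_dist_le_of_mem_segment {x s t : Y}
    (hseg : dist x s + dist s t = dist x t) (z : Y) :
    dist x s - dist z s ≤ dist x t - dist z t := by
  linarith [dist_triangle z s t]

theorem ne_of_dist_le_mul_dist {x s z : Y} {β : ℝ} (hβ : β < 1) (hsx : s ≠ x)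
    (hzs : dist z s ≤ β * dist x s) : z ≠ x := by
  rintro rfl
  have hxs : 0 < dist z s := dist_pos.2 hsx.symm
  nlinarith

theorem one_sub_mul_dist_le_dist_sub_dist {x s t z : Y} {ε : ℝ} (hε : 0 < ε)
    (hseg : dist x s + dist s t = dist x t) (hzs : dist z s ≤ min ε 1 / 2 * dist x s) :
    (1 - ε) * dist x z ≤ dist x t - dist z t := by
  have hprogress := dist_sub_dist_le_of_mem_segment hseg z
  have hxz : dist x z ≤ dist x s + dist z s := dist_triangle_right x z s
  have hxs : 0 ≤ dist x s := dist_nonneg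
  have hzs_nonneg : 0 ≤ dist z s := dist_nonneg
  rcases le_or_gt ε 1 with hε1 | hε1
  · rw [min_eq_left hε1] at hzs
    nlinarith [mul_le_mul_of_nonneg_left hxz (sub_nonneg.2 hε1)]
  · rw [min_eq_right hε1.le] at hzs
    nlinarith [mul_nonpos_of_nonpos_of_nonneg (sub_nonpos.2 hε1.le) (dist_nonneg (x := x) (y := z))]

theorem exists_mem_ne_one_sub_mul_dist_le {X : Set Y} {x t : Y} (htI : t ∈ genInwardSet X x)
    {ε : ℝ} (hε : 0 < ε) :
    ∃ z ∈ X, z ≠ x ∧ (1 - ε) * dist x z ≤ dist x t - dist z t := by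
  have hβ1 : min ε 1 / 2 < 1 := by linarith [min_le_right ε 1]
  obtain ⟨s, ⟨hseg, hsx⟩, z, hzX, hzs⟩ := htI (min ε 1 / 2) (by positivity)
  exact ⟨z, hzX, ne_of_dist_le_mul_dist hβ1 hsx hzs,
    one_sub_mul_dist_le_dist_sub_dist hε hseg hzs⟩

theorem le_infDist_sub_infDist_of_le_dist_sub_dist {C : Set Y} {x t z : Y} {a : ℝ}
    (htC : t ∈ C) (hnear : dist x t = infDist x C) (ha : a ≤ dist x t - dist z t) :
    a ≤ infDist x C - infDist z C := by
  linarith [infDist_le_dist_of_mem (x := z) htC]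

end InwardStep

theorem exists_inward_step_general
    {Y : Type*} [MetricSpace Y] (X C : Set Y)
    (x : Y) (ε : ℝ) (hε : 0 < ε)
    (t : Y) (htC : t ∈ C) (htI : t ∈ genInwardSet X x) :
    (∃ z ∈ X, z ≠ x ∧ (1 - ε) * dist x z ≤ dist x t - dist z t) ∧
    (dist x t = infDist x C →
      ∃ z ∈ X, z ≠ x ∧ (1 - ε) * dist x z ≤ infDist x C - infDist z C) := by
  obtain ⟨z, hzX, hzx, hstep⟩ := exists_mem_ne_one_sub_mul_dist_le htI hε
  exact ⟨⟨z, hzX, hzx, hstep⟩, fun hnear =>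
    ⟨z, hzX, hzx, le_infDist_sub_infDist_of_le_dist_sub_dist htC hnear hstep⟩⟩

/-- **Lemma 3.5.** Let `(Y,d)` be a metric space, `X, C` nonempty subsets of `Y`, and
`x ∈ X`. For each `ε > 0` and `t ∈ C ∩ Ĩ_X(x)` there exists `z ∈ X`, `z ≠ x`, with
`(1−ε)·d(x,z) ≤ d(x,t) − d(z,t)`; moreover, if `t` is a nearest point of `C` to `x`,
then `(1−ε)·d(x,z) ≤ d(x,C) − d(z,C)`. -/
theorem exists_inward_step
    {Y : Type*} [MetricSpace Y] (X C : Set Y) (hX : X.Nonempty) (hC : C.Nonempty)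
    (x : Y) (hx : x ∈ X) (ε : ℝ) (hε : 0 < ε)
    (t : Y) (htC : t ∈ C) (htI : t ∈ genInwardSet X x) :
    (∃ z ∈ X, z ≠ x ∧ (1 - ε) * dist x z ≤ dist x t - dist z t) ∧
    (dist x t = infDist x C →
      ∃ z ∈ X, z ≠ x ∧ (1 - ε) * dist x z ≤ infDist x C - infDist z C) :=
  exists_inward_step_general X C x ε hε t htC htI
end

section
/- Let X be a nonempty subset of a complete metric space (Y,d), let F be a multivalued mapping from X to Y whose graph {(x,t) : x ∈ X, t ∈ F(x)} is closed in Y × Y, and let δ be a metric on X ∪ F(X) that is uniformly equivalent to d (the identity between (X ∪ F(X), δ) and (X ∪ F(X), d) is uniformly continuous in both directions). Assume there exists k > 0 such that for each x ∈ X with x ∉ F(x) and each t ∈ F(x) there exist z ∈ X with z ≠ x and v ∈ F(z) satisfying δ(x,z) ≤ d(x,t) − d(z,v) and δ(t,v) ≤ k (d(x,t) − d(z,v)). Then F has a fixed point. -/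
/-!
Suppose `F` has no fixed point. Order the points `(x, t)` of the graph of `F` by
`(x, t) ≤ (z, v)` iff `δ(x, z) ≤ d(x, t) - d(z, v)` and `δ(t, v) ≤ k (d(x, t) - d(z, v))`.
Along an increasing sequence the gap `d(x, t)` decreases, so both coordinates are `δ`-Cauchy,
hence `d`-Cauchy; their limit lies in the closed graph and is an upper bound of the sequence.
The Brezis–Browder ordering principle then yields a point `(x, t)` on which the gap is constant
above it, whereas the hypothesis provides `(z, v) ≥ (x, t)` with `z ≠ x`, forcing a strict drop.
-/

open Filter Set Topology

theorem brezis_browder {P : Type*} [Preorder P] [Nonempty P] {φ : P → ℝ} (hφ : Antitone φ)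
    (hbdd : BddBelow (range φ)) (hseq : ∀ u : ℕ → P, Monotone u → ∃ q, ∀ n, u n ≤ q) :
    ∃ p, ∀ q, p ≤ q → φ q = φ p := by
  have hnext : ∀ (n : ℕ) (p : P), ∃ q, p ≤ q ∧ φ q < sInf (φ '' Ici p) + (1 / 2) ^ n := by
    intro n p
    have hne : (φ '' Ici p).Nonempty := ⟨φ p, p, le_rfl, rfl⟩
    obtain ⟨_, ⟨q, hpq, rfl⟩, hq⟩ :=
      Real.lt_sInf_add_pos hne (by positivity : (0 : ℝ) < (1 / 2) ^ n)
    exact ⟨q, hpq, hq⟩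
  choose next hle hlt using hnext
  let u : ℕ → P := fun n => Nat.rec (Classical.arbitrary P) next n
  obtain ⟨q, hq⟩ := hseq u (monotone_nat_of_le_succ fun n => hle n (u n))
  refine ⟨q, fun r hqr => le_antisymm (hφ hqr) (le_of_forall_pos_lt_add fun ε hε => ?_)⟩
  obtain ⟨n, hn⟩ := exists_pow_lt_of_lt_one hε one_half_lt_one
  calc φ q ≤ φ (u (n + 1)) := hφ (hq (n + 1))
    _ < sInf (φ '' Ici (u n)) + (1 / 2) ^ n := hlt n (u n)
    _ ≤ φ r + (1 / 2) ^ n := by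
      gcongr
      exact csInf_le (hbdd.mono (image_subset_range _ _)) ⟨r, (hq n).trans hqr, rfl⟩
    _ < φ r + ε := by gcongr

section UniformlyEquivalent

variable {Y : Type*} [MetricSpace Y] {S : Set Y} {δ : Y → Y → ℝ} {w : ℕ → Y} {f : ℕ → ℝ}
  {c : ℝ}

theorem cauchySeq_of_le_sub
    (hequiv : ∀ ε : ℝ, 0 < ε → ∃ η : ℝ, 0 < η ∧ ∀ a ∈ S, ∀ b ∈ S, δ a b < η → dist a b < ε)
    (hwS : ∀ n, w n ∈ S) (hf : Tendsto f atTop (𝓝 c))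
    (hw : ∀ n m, n ≤ m → δ (w n) (w m) ≤ f n - f m) : CauchySeq w := by
  rw [Metric.cauchySeq_iff']
  intro ε hε
  obtain ⟨η, hη, hδη⟩ := hequiv ε hε
  obtain ⟨N, hN⟩ := Metric.cauchySeq_iff'.1 hf.cauchySeq η hη
  refine ⟨N, fun n hn => ?_⟩
  have hfN : f N - f n < η := by
    have := hN n hn
    rw [Real.dist_eq] at this
    linarith [neg_abs_le (f n - f N)]
  rw [dist_comm]
  exact hδη _ (hwS N) _ (hwS n) ((hw N n hn).trans_lt hfN)

theorem tendsto_delta_right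
    (hequiv : ∀ ε : ℝ, 0 < ε → ∃ η : ℝ, 0 < η ∧ ∀ a ∈ S, ∀ b ∈ S, dist a b < η → δ a b < ε)
    (htri : ∀ a ∈ S, ∀ b ∈ S, ∀ c ∈ S, δ a c ≤ δ a b + δ b c)
    {x y : Y} (hx : x ∈ S) (hy : y ∈ S) (hwS : ∀ n, w n ∈ S) (hwy : Tendsto w atTop (𝓝 y)) :
    Tendsto (fun n => δ x (w n)) atTop (𝓝 (δ x y)) := by
  rw [Metric.tendsto_atTop]
  intro ε hε
  obtain ⟨η, hη, hδη⟩ := hequiv ε hε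
  obtain ⟨N, hN⟩ := Metric.tendsto_atTop.1 hwy η hη
  refine ⟨N, fun n hn => ?_⟩
  have h₁ := hδη _ (hwS n) _ hy (hN n hn)
  have h₂ := hδη _ hy _ (hwS n) (by rw [dist_comm]; exact hN n hn)
  rw [Real.dist_eq, abs_sub_lt_iff]
  constructor <;> linarith [htri _ hx _ hy _ (hwS n), htri _ hx _ (hwS n) _ hy]

theorem delta_le_sub_of_tendsto
    (hequiv : ∀ ε : ℝ, 0 < ε → ∃ η : ℝ, 0 < η ∧ ∀ a ∈ S, ∀ b ∈ S, dist a b < η → δ a b < ε)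
    (htri : ∀ a ∈ S, ∀ b ∈ S, ∀ c ∈ S, δ a c ≤ δ a b + δ b c)
    {y : Y} (hy : y ∈ S) (hwS : ∀ n, w n ∈ S) (hwy : Tendsto w atTop (𝓝 y))
    (hf : Tendsto f atTop (𝓝 c)) (hw : ∀ n m, n ≤ m → δ (w n) (w m) ≤ f n - f m) (n : ℕ) :
    δ (w n) y ≤ f n - c :=
  le_of_tendsto_of_tendsto (tendsto_delta_right hequiv htri (hwS n) hy hwS hwy)
    (tendsto_const_nhds.sub hf) (eventually_atTop.2 ⟨n, hw n⟩)

end UniformlyEquivalent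

section Graph

variable {Y : Type*} [MetricSpace Y] {X : Set Y}

abbrev GraphPt (F : X → Set Y) := {p : X × Y // p.2 ∈ F p.1}

namespace GraphPt

variable {F : X → Set Y} {S : Set Y} {δ : Y → Y → ℝ} {k : ℝ}

def gap (p : GraphPt F) : ℝ := dist (p.1.1 : Y) p.1.2

def Le (δ : Y → Y → ℝ) (k : ℝ) (p q : GraphPt F) : Prop :=
  δ p.1.1 q.1.1 ≤ p.gap - q.gap ∧ δ p.1.2 q.1.2 ≤ k * (p.gap - q.gap)

theorem Le.refl (hδ_self : ∀ a ∈ S, δ a a = 0) (hXS : X ⊆ S) (hFS : ∀ x, F x ⊆ S)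
    (p : GraphPt F) : Le δ k p p := by
  simp [Le, hδ_self _ (hXS p.1.1.2), hδ_self _ (hFS _ p.2)]

theorem Le.trans (htri : ∀ a ∈ S, ∀ b ∈ S, ∀ c ∈ S, δ a c ≤ δ a b + δ b c) (hXS : X ⊆ S)
    (hFS : ∀ x, F x ⊆ S) {p q r : GraphPt F} (hpq : Le δ k p q) (hqr : Le δ k q r) :
    Le δ k p r := by
  constructor
  · linarith [htri _ (hXS p.1.1.2) _ (hXS q.1.1.2) _ (hXS r.1.1.2), hpq.1, hqr.1]
  · linarith [htri _ (hFS _ p.2) _ (hFS _ q.2) _ (hFS _ r.2), hpq.2, hqr.2]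

theorem Le.gap_le (hδ_nonneg : ∀ a ∈ S, ∀ b ∈ S, 0 ≤ δ a b) (hXS : X ⊆ S)
    {p q : GraphPt F} (hpq : Le δ k p q) : q.gap ≤ p.gap := by
  linarith [hpq.1, hδ_nonneg _ (hXS p.1.1.2) _ (hXS q.1.1.2)]

theorem exists_forall_le_of_monotone [CompleteSpace Y]
    (hgraph : IsClosed {p : Y × Y | ∃ x : X, ∃ t ∈ F x, p = ((x : Y), t)})
    (hXS : X ⊆ S) (hFS : ∀ x, F x ⊆ S)
    (hδ_tri : ∀ a ∈ S, ∀ b ∈ S, ∀ c ∈ S, δ a c ≤ δ a b + δ b c)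
    (hδ_nonneg : ∀ a ∈ S, ∀ b ∈ S, 0 ≤ δ a b)
    (hequiv₁ : ∀ ε : ℝ, 0 < ε → ∃ η : ℝ, 0 < η ∧
      ∀ a ∈ S, ∀ b ∈ S, dist a b < η → δ a b < ε)
    (hequiv₂ : ∀ ε : ℝ, 0 < ε → ∃ η : ℝ, 0 < η ∧
      ∀ a ∈ S, ∀ b ∈ S, δ a b < η → dist a b < ε)
    {u : ℕ → GraphPt F} (hu : ∀ n m, n ≤ m → Le δ k (u n) (u m)) :
    ∃ q, ∀ n, Le δ k (u n) q := by
  have hxS : ∀ n, ((u n).1.1 : Y) ∈ S := fun n => hXS (u n).1.1.2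
  have htS : ∀ n, (u n).1.2 ∈ S := fun n => hFS _ (u n).2
  have hgap_anti : Antitone fun n => (u n).gap :=
    fun n m h => (hu n m h).gap_le hδ_nonneg hXS
  have hgap := tendsto_atTop_ciInf hgap_anti ⟨0, by rintro _ ⟨n, rfl⟩; exact dist_nonneg⟩
  have hkgap := hgap.const_mul k
  have hkw : ∀ n m, n ≤ m → δ (u n).1.2 (u m).1.2 ≤ k * (u n).gap - k * (u m).gap :=
    fun n m h => by rw [← mul_sub]; exact (hu n m h).2
  obtain ⟨x, hx⟩ := cauchySeq_tendsto_of_complete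
    (cauchySeq_of_le_sub hequiv₂ hxS hgap fun n m h => (hu n m h).1)
  obtain ⟨t, ht⟩ := cauchySeq_tendsto_of_complete (cauchySeq_of_le_sub hequiv₂ htS hkgap hkw)
  obtain ⟨ξ, t', ht'F, hxt⟩ := hgraph.mem_of_tendsto (hx.prodMk_nhds ht)
    (Eventually.of_forall fun n => ⟨(u n).1.1, (u n).1.2, (u n).2, rfl⟩)
  obtain ⟨rfl, rfl⟩ := Prod.mk.inj hxt
  let q : GraphPt F := ⟨(ξ, t), ht'F⟩
  have hgap_q : Tendsto (fun n => (u n).gap) atTop (𝓝 q.gap) := hx.dist ht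
  refine ⟨q, fun n => ⟨?_, ?_⟩⟩
  · exact delta_le_sub_of_tendsto hequiv₁ hδ_tri (hXS ξ.2) hxS hx hgap_q
      (fun n m h => (hu n m h).1) n
  · rw [mul_sub]
    exact delta_le_sub_of_tendsto hequiv₁ hδ_tri (hFS _ ht'F) htS ht (hgap_q.const_mul k) hkw n

end GraphPt

end Graph

theorem fixed_point_of_two_metric_tool_general
    {Y : Type*} [MetricSpace Y] [CompleteSpace Y]
    (X : Set Y) (hX : X.Nonempty)
    (F : X → Set Y) (hFne : ∀ x, (F x).Nonempty)
    (hgraph : IsClosed {p : Y × Y | ∃ x : X, ∃ t ∈ F x, p = ((x : Y), t)})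
    (S : Set Y) (hS : S = X ∪ ⋃ x : X, F x)
    (δ : Y → Y → ℝ)
    (hδ_eq_zero : ∀ a ∈ S, ∀ b ∈ S, (δ a b = 0 ↔ a = b))
    (hδ_tri : ∀ a ∈ S, ∀ b ∈ S, ∀ c ∈ S, δ a c ≤ δ a b + δ b c)
    (hδ_nonneg : ∀ a ∈ S, ∀ b ∈ S, 0 ≤ δ a b)
    (hequiv₁ : ∀ ε : ℝ, 0 < ε → ∃ η : ℝ, 0 < η ∧
      ∀ a ∈ S, ∀ b ∈ S, dist a b < η → δ a b < ε)
    (hequiv₂ : ∀ ε : ℝ, 0 < ε → ∃ η : ℝ, 0 < η ∧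
      ∀ a ∈ S, ∀ b ∈ S, δ a b < η → dist a b < ε)
    (k : ℝ)
    (hcond : ∀ x : X, (x : Y) ∉ F x → ∀ t ∈ F x, ∃ z : X, z ≠ x ∧ ∃ v ∈ F z,
      δ (x : Y) (z : Y) ≤ dist (x : Y) t - dist (z : Y) v ∧
      δ t v ≤ k * (dist (x : Y) t - dist (z : Y) v)) :
    ∃ x : X, (x : Y) ∈ F x := by
  by_contra! hfix
  have hXS : X ⊆ S := hS ▸ subset_union_left
  have hFS : ∀ x, F x ⊆ S := fun x => hS ▸ (subset_iUnion F x).trans subset_union_right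
  let : Preorder (GraphPt F) :=
    { le := GraphPt.Le δ k
      le_refl := GraphPt.Le.refl (fun a ha => (hδ_eq_zero a ha a ha).2 rfl) hXS hFS
      le_trans := fun _ _ _ => GraphPt.Le.trans hδ_tri hXS hFS }
  obtain ⟨x₀, hx₀⟩ := hX
  have : Nonempty (GraphPt F) := ⟨⟨(⟨x₀, hx₀⟩, _), (hFne ⟨x₀, hx₀⟩).some_mem⟩⟩
  obtain ⟨⟨⟨x, t⟩, ht⟩, hmax⟩ := brezis_browder (φ := GraphPt.gap)
    (fun _ _ h => GraphPt.Le.gap_le hδ_nonneg hXS h) ⟨0, by rintro _ ⟨p, rfl⟩; exact dist_nonneg⟩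
    fun _ hu => GraphPt.exists_forall_le_of_monotone hgraph hXS hFS hδ_tri hδ_nonneg hequiv₁
      hequiv₂ fun _ _ h => hu h
  obtain ⟨z, hzx, v, hv, hδx, hδt⟩ := hcond x (hfix x) t ht
  have hgap : dist (z : Y) v = dist (x : Y) t := hmax ⟨(z, v), hv⟩ ⟨hδx, hδt⟩
  have hδ_zero : δ x z = 0 :=
    le_antisymm (by linarith) (hδ_nonneg _ (hXS x.2) _ (hXS z.2))
  exact hzx (Subtype.ext ((hδ_eq_zero _ (hXS x.2) _ (hXS z.2)).1 hδ_zero).symm)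

/-- **Theorem 3.8.** Let `X` be a nonempty subset of a complete metric space `(Y,d)`,
`F` a multivalued mapping from `X` to `Y` (nonempty values) with closed graph, and `δ` a
metric on `S = X ∪ F(X)` uniformly equivalent to `d`. If there is `k > 0` such that for
each `x ∈ X` with `x ∉ F(x)` and each `t ∈ F(x)` there are `z ∈ X`, `z ≠ x`, and
`v ∈ F(z)` with `δ(x,z) ≤ d(x,t) − d(z,v)` and `δ(t,v) ≤ k·(d(x,t) − d(z,v))`, then `F`
has a fixed point. -/
theorem fixed_point_of_two_metric_tool
    {Y : Type*} [MetricSpace Y] [CompleteSpace Y]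
    (X : Set Y) (hX : X.Nonempty)
    (F : X → Set Y) (hFne : ∀ x, (F x).Nonempty)
    (hgraph : IsClosed {p : Y × Y | ∃ x : X, ∃ t ∈ F x, p = ((x : Y), t)})
    (S : Set Y) (hS : S = X ∪ ⋃ x : X, F x)
    (δ : Y → Y → ℝ)
    (hδ_eq_zero : ∀ a ∈ S, ∀ b ∈ S, (δ a b = 0 ↔ a = b))
    (hδ_symm : ∀ a ∈ S, ∀ b ∈ S, δ a b = δ b a)
    (hδ_tri : ∀ a ∈ S, ∀ b ∈ S, ∀ c ∈ S, δ a c ≤ δ a b + δ b c)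
    (hδ_nonneg : ∀ a ∈ S, ∀ b ∈ S, 0 ≤ δ a b)
    (hequiv₁ : ∀ ε : ℝ, 0 < ε → ∃ η : ℝ, 0 < η ∧
      ∀ a ∈ S, ∀ b ∈ S, dist a b < η → δ a b < ε)
    (hequiv₂ : ∀ ε : ℝ, 0 < ε → ∃ η : ℝ, 0 < η ∧
      ∀ a ∈ S, ∀ b ∈ S, δ a b < η → dist a b < ε)
    (k : ℝ) (hk : 0 < k)
    (hcond : ∀ x : X, (x : Y) ∉ F x → ∀ t ∈ F x, ∃ z : X, z ≠ x ∧ ∃ v ∈ F z,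
      δ (x : Y) (z : Y) ≤ dist (x : Y) t - dist (z : Y) v ∧
      δ t v ≤ k * (dist (x : Y) t - dist (z : Y) v)) :
    ∃ x : X, (x : Y) ∈ F x :=
  fixed_point_of_two_metric_tool_general X hX F hFne hgraph S hS δ hδ_eq_zero hδ_tri hδ_nonneg
    hequiv₁ hequiv₂ k hcond
end

section
/- Let X be a nonempty closed subset of a complete metric space (Y,d), let α, ε ≥ 0 with α + ε < 1, and let F be a multivalued mapping from X to Y with nonempty closed bounded values that is an α-contraction. Assume there exists ε₁ ∈ (0,ε) such that for each x ∈ X with x ∉ F(x) and each t ∈ F(x) there exists z ∈ X with z ≠ x and (1−ε₁) d(x,z) ≤ d(x,t) − d(z,t). Then for each x ∈ X with x ∉ F(x) and each t ∈ F(x) there exist z ∈ X with z ≠ x and v ∈ F(z) such that (1−α−ε) max{d(x,z), d(t,v)/(α+ε)} ≤ d(x,t) − d(z,v), and F has a fixed point. -/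
/-!
Given `x ∉ F x`, `t ∈ F x` and the point `z` of the inward condition, the contraction gives
`d(t, F z) ≤ α d(x,z) < (α + ε - ε₁) d(x,z)`, so some `v ∈ F z` is that close to `t`, and the
triangle inequality `d(z,v) ≤ d(z,t) + d(t,v)` yields the first claim.

For the fixed point, the graph `{(x,t) | t ∈ F x}` is closed (its defining function
`(x,t) ↦ d(t, F x)` is Lipschitz), hence complete. For `φ(x,t) = d(x,t) / (1 - α - ε)` the
first claim gives, at each point of the graph with `x ∉ F x`, another point `(z,v)` with
`d((x,t),(z,v)) ≤ φ(x,t) - φ(z,v)`. So a minimal point of Caristi's order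
`q ≼ p ↔ d(q,p) ≤ φ p - φ q`, which exists by Ekeland's argument with nested closed sets of
vanishing diameter, is a fixed point.
-/

open Metric Filter Set Topology

section Caristi

variable {T : Type*} {f : T → ℝ}

lemma dist_le_sub_trans [PseudoMetricSpace T] {x y z : T} (hzy : dist z y ≤ f y - f z)
    (hyx : dist y x ≤ f x - f y) : dist z x ≤ f x - f z := by
  linarith [dist_triangle z y x]

lemma exists_dist_le_sub_forall_dist_le_sub_imp_lt [PseudoMetricSpace T]
    (hbdd : BddBelow (range f)) (u : T) {δ : ℝ} (hδ : 0 < δ) :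
    ∃ u', dist u' u ≤ f u - f u' ∧ ∀ z, dist z u' ≤ f u' - f z → dist z u' < δ := by
  set S := {z | dist z u ≤ f u - f z}
  have hS : S.Nonempty := ⟨u, by simp [S]⟩
  obtain ⟨_, ⟨u', hu', rfl⟩, hu'_lt⟩ := Real.lt_sInf_add_pos (hS.image f) hδ
  refine ⟨u', hu', fun z hz => ?_⟩
  have : sInf (f '' S) ≤ f z :=
    csInf_le (hbdd.mono (image_subset_range f S)) (mem_image_of_mem f (dist_le_sub_trans hz hu'))
  linarith

/-- The Caristi–Ekeland principle, in minimal-point form. -/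
theorem LowerSemicontinuous.exists_forall_dist_le_sub_imp_eq [MetricSpace T] [CompleteSpace T]
    [Nonempty T] (hf : LowerSemicontinuous f) (hbdd : BddBelow (range f)) :
    ∃ m, ∀ z, dist z m ≤ f m - f z → z = m := by
  choose next hnext hsmall using fun (n : ℕ) u =>
    exists_dist_le_sub_forall_dist_le_sub_imp_lt hbdd u (Nat.one_div_pos_of_nat (n := n))
  let u : ℕ → T := fun n => Nat.rec (Classical.arbitrary T) next n
  let s : ℕ → Set T := fun n => {z | dist z (u (n + 1)) ≤ f (u (n + 1)) - f z}
  have hs_closed : ∀ n, IsClosed (s n) := fun n => by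
    simpa only [s, le_sub_iff_add_le, preimage, mem_Iic, id] using
      ((continuous_id.dist continuous_const).lowerSemicontinuous.add hf).isClosed_preimage
        (f (u (n + 1)))
  have hs_ball : ∀ n, s n ⊆ closedBall (u (n + 1)) (1 / (n + 1)) :=
    fun n z hz => (hsmall n (u n) z hz).le
  have hs_anti : Antitone s :=
    antitone_nat_of_succ_le fun n _ hz => dist_le_sub_trans hz (hnext (n + 1) (u (n + 1)))
  have hradius : Tendsto (fun n : ℕ => 2 * (1 / ((n : ℝ) + 1))) atTop (𝓝 0) := by
    simpa using tendsto_one_div_add_atTop_nhds_zero_nat.const_mul (2 : ℝ)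
  obtain ⟨m, hm⟩ := nonempty_iInter_of_nonempty_biInter hs_closed
    (fun n => isBounded_closedBall.subset (hs_ball n))
    (fun N => ⟨u (N + 1), mem_iInter₂.2 fun _ hn => hs_anti hn (by simp [s])⟩)
    (squeeze_zero (fun _ => diam_nonneg)
      (fun n => diam_le_of_subset_closedBall (by positivity) (hs_ball n)) hradius)
  rw [mem_iInter] at hm
  refine ⟨m, fun z hz => dist_le_zero.1 (ge_of_tendsto' hradius fun n => ?_)⟩
  have hzn := hs_ball n (dist_le_sub_trans hz (hm n))
  have hmn := hs_ball n (hm n)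
  rw [mem_closedBall] at hzn hmn
  linarith [dist_triangle_right z m (u (n + 1))]

end Caristi

section HausdorffLipschitz

variable {X Y : Type*} [PseudoMetricSpace X] [PseudoMetricSpace Y] {F : X → Set Y} {K : ℝ}

lemma continuous_infDist_of_hausdorffDist_le (hK : 0 ≤ K) (hne : ∀ x, (F x).Nonempty)
    (hbdd : ∀ x, Bornology.IsBounded (F x))
    (hF : ∀ x y, hausdorffDist (F y) (F x) ≤ K * dist y x) :
    Continuous fun p : X × Y => infDist p.2 (F p.1) := by
  refine (LipschitzWith.of_le_add_mul' (K + 1) fun p q => ?_).continuous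
  have hmove := infDist_le_infDist_add_hausdorffDist (x := p.2)
    (hausdorffEDist_ne_top_of_nonempty_of_bounded (hne q.1) (hne p.1) (hbdd q.1) (hbdd p.1))
  have hshift := infDist_le_infDist_add_dist (s := F q.1) (x := p.2) (y := q.2)
  have h₁ : dist q.1 p.1 ≤ dist p q := dist_comm p.1 q.1 ▸ le_max_left _ _
  have h₂ : dist p.2 q.2 ≤ dist p q := le_max_right _ _
  nlinarith [hF p.1 q.1]

lemma isClosed_setOf_mem_of_hausdorffDist_le (hK : 0 ≤ K) (hne : ∀ x, (F x).Nonempty)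
    (hbdd : ∀ x, Bornology.IsBounded (F x)) (hcl : ∀ x, IsClosed (F x))
    (hF : ∀ x y, hausdorffDist (F y) (F x) ≤ K * dist y x) :
    IsClosed {p : X × Y | p.2 ∈ F p.1} := by
  have : {p : X × Y | p.2 ∈ F p.1} = (fun p : X × Y => infDist p.2 (F p.1)) ⁻¹' {0} := by
    ext p
    exact (hcl p.1).mem_iff_infDist_zero (hne p.1)
  rw [this]
  exact isClosed_singleton.preimage (continuous_infDist_of_hausdorffDist_le hK hne hbdd hF)

end HausdorffLipschitz

lemma exists_mem_mul_max_le_dist_sub_dist {Y : Type*} [MetricSpace Y] {s : Set Y} {x z t : Y}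
    {α ε ε₁ : ℝ} (hα : 0 ≤ α) (hε₁ : 0 ≤ ε₁) (hε₁ε : ε₁ < ε) (hs : s.Nonempty) (hzx : z ≠ x)
    (hts : infDist t s ≤ α * dist x z) (hz : (1 - ε₁) * dist x z ≤ dist x t - dist z t) :
    ∃ v ∈ s, (1 - α - ε) * max (dist x z) (dist t v / (α + ε)) ≤ dist x t - dist z v := by
  have hxz : 0 < dist x z := dist_pos.2 hzx.symm
  obtain ⟨v, hv, htv⟩ := (infDist_lt_iff hs).1
    (hts.trans_lt (by nlinarith : α * dist x z < (α + ε - ε₁) * dist x z))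
  refine ⟨v, hv, ?_⟩
  have hmax : dist t v / (α + ε) ≤ dist x z := by
    rw [div_le_iff₀ (by linarith)]
    nlinarith
  rw [max_eq_left hmax]
  nlinarith [dist_triangle z t v]

theorem exists_mem_self_of_isClosed_setOf_mem {Y : Type*} [MetricSpace Y] [CompleteSpace Y]
    {X : Set Y} (hX : X.Nonempty) (hXcl : IsClosed X) {F : X → Set Y}
    (hFne : ∀ x, (F x).Nonempty) (hgraph : IsClosed {p : X × Y | p.2 ∈ F p.1}) {c : ℝ}
    (hc : 0 < c)
    (hstep : ∀ x : X, (x : Y) ∉ F x → ∀ t ∈ F x, ∃ z : X, z ≠ x ∧ ∃ v ∈ F z,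
      c * max (dist (x : Y) (z : Y)) (dist t v) ≤ dist (x : Y) t - dist (z : Y) v) :
    ∃ x : X, (x : Y) ∈ F x := by
  have : CompleteSpace X := hXcl.completeSpace_coe
  let G := {p : X × Y | p.2 ∈ F p.1}
  have : CompleteSpace G := hgraph.completeSpace_coe
  obtain ⟨x₀⟩ := hX.to_subtype
  have : Nonempty G := ⟨⟨(x₀, _), (hFne x₀).some_mem⟩⟩
  have hcont : Continuous fun p : G => dist (p.1.1 : Y) p.1.2 / c :=
    (((continuous_subtype_val.comp continuous_fst).dist continuous_snd).comp
      continuous_subtype_val).div_const c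
  obtain ⟨m, hm⟩ := hcont.lowerSemicontinuous.exists_forall_dist_le_sub_imp_eq
    ⟨0, forall_mem_range.2 fun p => div_nonneg dist_nonneg hc.le⟩
  by_contra! hfix
  obtain ⟨z, hzx, v, hv, hzv⟩ := hstep m.1.1 (hfix _) m.1.2 m.2
  refine hzx (congrArg (fun p : G => p.1.1) (hm ⟨(z, v), hv⟩ ?_))
  rw [Subtype.dist_eq, Prod.dist_eq, Subtype.dist_eq, ← sub_div, le_div_iff₀ hc,
    dist_comm v, dist_comm (z : Y)]
  linarith [mul_comm c (max (dist (m.1.1 : Y) (z : Y)) (dist m.1.2 v))]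

theorem fixed_point_of_strict_inward_condition_general
    {Y : Type*} [MetricSpace Y] [CompleteSpace Y]
    (X : Set Y) (hX : X.Nonempty) (hXcl : IsClosed X)
    (α ε : ℝ) (hα : 0 ≤ α) (hαε : α + ε < 1)
    (F : X → Set Y) (hFne : ∀ x, (F x).Nonempty)
    (hFcl : ∀ x, IsClosed (F x)) (hFbdd : ∀ x, Bornology.IsBounded (F x))
    (hcontr : ∀ x y : X, hausdorffDist (F y) (F x) ≤ α * dist (y : Y) (x : Y))
    (ε₁ : ℝ) (hε₁ : 0 < ε₁) (hε₁ε : ε₁ < ε)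
    (hcond : ∀ x : X, (x : Y) ∉ F x → ∀ t ∈ F x, ∃ z : X, z ≠ x ∧
      (1 - ε₁) * dist (x : Y) (z : Y) ≤ dist (x : Y) t - dist (z : Y) t) :
    (∀ x : X, (x : Y) ∉ F x → ∀ t ∈ F x, ∃ z : X, z ≠ x ∧ ∃ v ∈ F z,
      (1 - α - ε) * max (dist (x : Y) (z : Y)) (dist t v / (α + ε)) ≤
        dist (x : Y) t - dist (z : Y) v) ∧
    ∃ x : X, (x : Y) ∈ F x := by
  have hstep : ∀ x : X, (x : Y) ∉ F x → ∀ t ∈ F x, ∃ z : X, z ≠ x ∧ ∃ v ∈ F z,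
      (1 - α - ε) * max (dist (x : Y) (z : Y)) (dist t v / (α + ε)) ≤
        dist (x : Y) t - dist (z : Y) v := by
    intro x hx t ht
    obtain ⟨z, hzx, hz⟩ := hcond x hx t ht
    have htz : infDist t (F z) ≤ α * dist (x : Y) (z : Y) :=
      (infDist_le_hausdorffDist_of_mem ht (hausdorffEDist_ne_top_of_nonempty_of_bounded
        (hFne x) (hFne z) (hFbdd x) (hFbdd z))).trans (hcontr z x)
    exact ⟨z, hzx, exists_mem_mul_max_le_dist_sub_dist hα hε₁.le hε₁ε (hFne z)
      (Subtype.coe_injective.ne hzx) htz hz⟩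
  refine ⟨hstep, exists_mem_self_of_isClosed_setOf_mem hX hXcl hFne
    (isClosed_setOf_mem_of_hausdorffDist_le hα hFne hFbdd hFcl hcontr)
    (by linarith : 0 < 1 - α - ε) fun x hx t ht => ?_⟩
  obtain ⟨z, hzx, v, hv, h⟩ := hstep x hx t ht
  refine ⟨z, hzx, v, hv, le_trans ?_ h⟩
  gcongr
  · linarith
  · exact le_div_self dist_nonneg (by linarith) (by linarith)

/-- **Theorem 3.9.** Let `X` be a nonempty closed subset of a complete metric space
`(Y,d)`, `α, ε ≥ 0` with `α + ε < 1`, and `F` an `α`-contraction from `X` to `Y` with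
nonempty closed bounded values. Assume there is `ε₁ ∈ (0,ε)` such that for each `x ∈ X`
with `x ∉ F(x)` and each `t ∈ F(x)` there exists `z ∈ X`, `z ≠ x`, with
`(1−ε₁)·d(x,z) ≤ d(x,t) − d(z,t)`. Then for each `x ∈ X` with `x ∉ F(x)` and each
`t ∈ F(x)` there are `z ∈ X`, `z ≠ x`, and `v ∈ F(z)` with
`(1−α−ε)·max{d(x,z), d(t,v)/(α+ε)} ≤ d(x,t) − d(z,v)`, and `F` has a fixed point. -/
theorem fixed_point_of_strict_inward_condition
    {Y : Type*} [MetricSpace Y] [CompleteSpace Y]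
    (X : Set Y) (hX : X.Nonempty) (hXcl : IsClosed X)
    (α ε : ℝ) (hα : 0 ≤ α) (hε : 0 ≤ ε) (hαε : α + ε < 1)
    (F : X → Set Y) (hFne : ∀ x, (F x).Nonempty)
    (hFcl : ∀ x, IsClosed (F x)) (hFbdd : ∀ x, Bornology.IsBounded (F x))
    (hcontr : ∀ x y : X, hausdorffDist (F y) (F x) ≤ α * dist (y : Y) (x : Y))
    (ε₁ : ℝ) (hε₁ : 0 < ε₁) (hε₁ε : ε₁ < ε)
    (hcond : ∀ x : X, (x : Y) ∉ F x → ∀ t ∈ F x, ∃ z : X, z ≠ x ∧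
      (1 - ε₁) * dist (x : Y) (z : Y) ≤ dist (x : Y) t - dist (z : Y) t) :
    (∀ x : X, (x : Y) ∉ F x → ∀ t ∈ F x, ∃ z : X, z ≠ x ∧ ∃ v ∈ F z,
      (1 - α - ε) * max (dist (x : Y) (z : Y)) (dist t v / (α + ε)) ≤
        dist (x : Y) t - dist (z : Y) v) ∧
    ∃ x : X, (x : Y) ∈ F x :=
  fixed_point_of_strict_inward_condition_general X hX hXcl α ε hα hαε F hFne hFcl hFbdd hcontr ε₁
    hε₁ hε₁ε hcond
end

section
/- Let X be a nonempty compact subset of a metric space (Y,d) and let F be a multivalued mapping from X to Y such that the function x ↦ d(x,F(x)) is lower semicontinuous on X, and such that for each x ∈ X with x ∉ F(x) there exists z ∈ X with d(z,F(z)) < d(x,F(x)). Then F has a fixed point. -/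
open Metric Filter

theorem fixed_point_of_compact_lsc_general
    {Y : Type*} [MetricSpace Y] (X : Set Y) (hX : X.Nonempty) (hXcpt : IsCompact X)
    (F : X → Set Y)
    (hlsc : LowerSemicontinuous (fun x : X => infDist (x : Y) (F x)))
    (hcond : ∀ x : X, (x : Y) ∉ F x → ∃ z : X,
      infDist (z : Y) (F z) < infDist (x : Y) (F x)) :
    ∃ x : X, (x : Y) ∈ F x := by
  have : CompactSpace X := isCompact_iff_compactSpace.1 hXcpt
  have : Nonempty X := hX.to_subtype
  obtain ⟨x₀, -, hmin⟩ :=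
    (hlsc.lowerSemicontinuousOn _).exists_isMinOn Set.univ_nonempty isCompact_univ
  by_contra! hno
  obtain ⟨z, hz⟩ := hcond x₀ (hno x₀)
  exact (hmin (Set.mem_univ z)).not_gt hz

/-- **Theorem 3.13.** Let `X` be a nonempty compact subset of a metric space `(Y,d)` and
`F` a multivalued mapping from `X` to `Y` (nonempty values) such that `x ↦ d(x,F(x))` is
lower semicontinuous on `X` and for each `x ∈ X` with `x ∉ F(x)` there exists `z ∈ X`
with `d(z,F(z)) < d(x,F(x))`. Then `F` has a fixed point. -/
theorem fixed_point_of_compact_lsc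
    {Y : Type*} [MetricSpace Y] (X : Set Y) (hX : X.Nonempty) (hXcpt : IsCompact X)
    (F : X → Set Y) (hFne : ∀ x, (F x).Nonempty)
    (hlsc : LowerSemicontinuous (fun x : X => infDist (x : Y) (F x)))
    (hcond : ∀ x : X, (x : Y) ∉ F x → ∃ z : X,
      infDist (z : Y) (F z) < infDist (x : Y) (F x)) :
    ∃ x : X, (x : Y) ∈ F x :=
  fixed_point_of_compact_lsc_general X hX hXcpt F hlsc hcond
end
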